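/- Let α be a topological space in which every singleton set is open (equivalently, α has no limit points, i.e., no point x has the property that every neighborhood of x contains a point different from x) and let I be an admissible ideal on ℕ. Then for every sequence η : ℕ → α and every x ∈ α, η is I-convergent to x if and only if η is I*-convergent to x. -/

import Mathlib

/-- An ideal on ℕ: a collection of subsets of ℕ containing ∅,
closed under subsets and finite unions. -/
structure IsIdeal (I : Set (Set ℕ)) : Prop where
  empty_mem : (∅ : Set ℕ) ∈ I
  subset_mem : ∀ {A B : Set ℕ}, A ∈ I → B ⊆ A → B ∈ I
  union_mem : ∀ {A B : Set ℕ}, A ∈ I → B ∈ I → A ∪ B ∈ I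

/-- A non-trivial ideal: an ideal with I ≠ {∅} and ℕ ∉ I. -/
def IsNonTrivialIdeal (I : Set (Set ℕ)) : Prop :=
  IsIdeal I ∧ I ≠ {∅} ∧ (Set.univ : Set ℕ) ∉ I

/-- An admissible ideal: a non-trivial ideal containing every singleton. -/
def IsAdmissibleIdeal (I : Set (Set ℕ)) : Prop :=
  IsNonTrivialIdeal I ∧ ∀ n : ℕ, ({n} : Set ℕ) ∈ I

variable {α : Type*} [TopologicalSpace α]

/-- A sequence η is I-convergent to x if for every neighborhood U of x,
the set {n | η n ∉ U} belongs to I. -/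
def IConv (I : Set (Set ℕ)) (η : ℕ → α) (x : α) : Prop :=
  ∀ U ∈ nhds x, {n : ℕ | η n ∉ U} ∈ I

/-- A sequence η is I*-convergent to x if there is P ⊆ ℕ with ℕ \ P ∈ I such that
the subsequence indexed by P converges to x (for every neighborhood U of x,
{n ∈ P | η n ∉ U} is finite). -/
def IStarConv (I : Set (Set ℕ)) (η : ℕ → α) (x : α) : Prop :=
  ∃ P : Set ℕ, Pᶜ ∈ I ∧ ∀ U ∈ nhds x, {n : ℕ | n ∈ P ∧ η n ∉ U}.Finite

/-- x is an I-limit point of η if there exists P ∉ I such that the subsequence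
of η indexed by P converges to x. -/
def IsILimitPt (I : Set (Set ℕ)) (η : ℕ → α) (x : α) : Prop :=
  ∃ P : Set ℕ, P ∉ I ∧ ∀ U ∈ nhds x, {n : ℕ | n ∈ P ∧ η n ∉ U}.Finite

/-- x is an I-cluster point of η if for every neighborhood U of x,
{n | η n ∈ U} ∉ I. -/
def IsIClusterPt (I : Set (Set ℕ)) (η : ℕ → α) (x : α) : Prop :=
  ∀ U ∈ nhds x, {n : ℕ | η n ∈ U} ∉ I

/-- Condition (AP): for every countable family of pairwise disjoint sets in I there
is a countable family K with each symmetric difference Hᵢ Δ Kᵢ finite and ⋃ Kᵢ ∈ I. -/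
def APCondition (I : Set (Set ℕ)) : Prop :=
  ∀ H : ℕ → Set ℕ, (∀ i, H i ∈ I) → Pairwise (Function.onFun Disjoint H) →
    ∃ K : ℕ → Set ℕ, (∀ i, (symmDiff (H i) (K i)).Finite) ∧ (⋃ i, K i) ∈ I

/-!
Since `{x}` is a neighbourhood of `x`, the indices `n` with `η n = x` form a set whose complement
lies in `I`, and along it the sequence is constant. Conversely, for an ideal containing all
singletons, the indices where an I*-convergent sequence leaves a neighbourhood are covered by a
set of `I` and a finite set.
-/

section

variable {I : Set (Set ℕ)} {η : ℕ → α} {x : α}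

lemma IsIdeal.finite_mem (hI : IsIdeal I) (hsingleton : ∀ n : ℕ, ({n} : Set ℕ) ∈ I)
    {S : Set ℕ} (hS : S.Finite) : S ∈ I := by
  induction S, hS using Set.Finite.induction_on with
  | empty => exact hI.empty_mem
  | @insert a s _ _ ih =>
    rw [Set.insert_eq]
    exact hI.union_mem (hsingleton a) ih

lemma IStarConv.iConv (hI : IsIdeal I) (hsingleton : ∀ n : ℕ, ({n} : Set ℕ) ∈ I)
    (h : IStarConv I η x) : IConv I η x := by
  obtain ⟨P, hPc, hP⟩ := h
  intro U hU
  refine hI.subset_mem (hI.union_mem hPc (hI.finite_mem hsingleton (hP U hU))) ?_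
  exact fun n hn => or_iff_not_imp_left.2 fun hnP => ⟨not_not.1 hnP, hn⟩

lemma IConv.iStarConv (hx : IsOpen ({x} : Set α)) (h : IConv I η x) : IStarConv I η x := by
  refine ⟨{n | η n = x}, h {x} (hx.mem_nhds rfl), fun U hU => ?_⟩
  refine Set.finite_empty.subset fun n ⟨hn, hnU⟩ => hnU ?_
  exact (hn : η n = x) ▸ mem_of_mem_nhds hU

end

theorem stmt_5 (hdiscrete : ∀ a : α, IsOpen ({a} : Set α))
    (I : Set (Set ℕ)) (hI : IsAdmissibleIdeal I)
    (η : ℕ → α) (x : α) :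
    IConv I η x ↔ IStarConv I η x :=
  ⟨IConv.iStarConv (hdiscrete x), IStarConv.iConv hI.1.1 hI.2⟩
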